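/- arXiv:1301.1317 — 2 statements merged into one kernel-verified Lean document; each statement's English description precedes it below -/
import Mathlib

section
/- Let T > 0 and a > 0. Let x, γ : [0,T] → ℝ be continuous nonnegative functions satisfying x(t) ≤ γ(t) + a·x(t)² for all t ∈ [0,T], and suppose that 1 − 4aγ(t) > 0 for all t ∈ [0,T]. Let ξ₁(t) := (1 − √(1 − 4aγ(t)))/(2a) denote the smaller of the two roots of the quadratic equation a·z² − z + γ(t) = 0. If x(0) < ξ₁(0), then x(t) ≤ ξ₁(t) for all t ∈ [0,T]. -/
/-- Botsenyuk's comparison lemma: if a continuous nonnegative function `x`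
satisfies `x t ≤ γ t + a * (x t)^2` on `[0,T]`, the discriminant
`1 - 4*a*γ t` stays positive, and `x 0` is below the smaller root
`ξ₁ 0 = (1 - √(1 - 4*a*γ 0))/(2*a)` of `a*z^2 - z + γ 0 = 0`, then
`x t ≤ ξ₁ t` on all of `[0,T]`. -/
theorem botsenyuk_comparison
    (T a : ℝ) (hT : 0 < T) (ha : 0 < a)
    (x γ : ℝ → ℝ)
    (hx_cont : ContinuousOn x (Set.Icc 0 T))
    (hγ_cont : ContinuousOn γ (Set.Icc 0 T))
    (hx_nonneg : ∀ t ∈ Set.Icc 0 T, 0 ≤ x t)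
    (hγ_nonneg : ∀ t ∈ Set.Icc 0 T, 0 ≤ γ t)
    (hineq : ∀ t ∈ Set.Icc 0 T, x t ≤ γ t + a * (x t) ^ 2)
    (hdisc : ∀ t ∈ Set.Icc 0 T, 0 < 1 - 4 * a * γ t)
    (ξ₁ : ℝ → ℝ)
    (hξ₁ : ∀ t, ξ₁ t = (1 - Real.sqrt (1 - 4 * a * γ t)) / (2 * a))
    (h0 : x 0 < ξ₁ 0) :
    ∀ t ∈ Set.Icc 0 T, x t ≤ ξ₁ t := by
  by_contra h
  push_neg at h
  obtain ⟨t₀, ht₀, hgt⟩ := h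
  have ha2 : (0:ℝ) < 2 * a := by linarith
  -- x never equals 1/(2a)
  have hne : ∀ t ∈ Set.Icc 0 T, x t ≠ 1 / (2 * a) := by
    intro t ht heq
    have h1 := hineq t ht
    have h2 := hdisc t ht
    rw [heq] at h1
    have : (1:ℝ) / (2 * a) ≤ γ t + a * (1 / (2 * a)) ^ 2 := h1
    have hγlt : γ t < 1 / (4 * a) := by
      rw [lt_div_iff₀ (by linarith)]; linarith
    rw [div_pow, one_pow] at this
    have h4 : a * (1 / (2 * a) ^ 2) = 1 / (4 * a) := by
      field_simp; ring
    rw [h4] at this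
    have : (1:ℝ) / (2 * a) ≤ 2 * (1 / (4 * a)) := by linarith
    have h5 : (2:ℝ) * (1 / (4 * a)) = 1 / (2 * a) := by field_simp; ring
    rw [h5] at this
    -- so 1/(2a) ≤ γ t + 1/(4a) < 1/(4a)+1/(4a) = 1/(2a), need strictness
    have : (1:ℝ) / (2 * a) < 1 / (4 * a) + 1 / (4 * a) := by
      calc (1:ℝ) / (2 * a) ≤ γ t + 1 / (4 * a) := by linarith
        _ < 1 / (4 * a) + 1 / (4 * a) := by linarith
    have : (1:ℝ) / (4 * a) + 1 / (4 * a) = 1 / (2 * a) := by field_simp; ring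
    linarith
  have h0mem : (0:ℝ) ∈ Set.Icc 0 T := ⟨le_refl _, hT.le⟩
  -- x 0 < 1/(2a)
  have hx0 : x 0 < 1 / (2 * a) := by
    have hd := hdisc 0 h0mem
    have hs : 0 < Real.sqrt (1 - 4 * a * γ 0) := Real.sqrt_pos.mpr hd
    rw [hξ₁ 0] at h0
    have : (1 - Real.sqrt (1 - 4 * a * γ 0)) / (2 * a) < 1 / (2 * a) := by
      rw [div_lt_div_iff₀ ha2 ha2]
      nlinarith
    linarith
  -- x t₀ > 1/(2a)
  have hxt₀ : 1 / (2 * a) < x t₀ := by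
    have hd := hdisc t₀ ht₀
    have hs : 0 < Real.sqrt (1 - 4 * a * γ t₀) := Real.sqrt_pos.mpr hd
    have hsq : (Real.sqrt (1 - 4 * a * γ t₀)) ^ 2 = 1 - 4 * a * γ t₀ :=
      Real.sq_sqrt hd.le
    have h1 := hineq t₀ ht₀
    rw [hξ₁ t₀] at hgt
    rw [div_lt_iff₀ ha2] at hgt
    rw [div_lt_iff₀ ha2]
    nlinarith [sq_nonneg (x t₀ * (2 * a) - 1), hs, hsq, h1]
  -- IVT on [0, t₀]
  have hsub : Set.Icc (0:ℝ) t₀ ⊆ Set.Icc 0 T :=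
    Set.Icc_subset_Icc le_rfl ht₀.2
  have hcont : ContinuousOn x (Set.Icc 0 t₀) := hx_cont.mono hsub
  have := intermediate_value_Icc ht₀.1 hcont
  have hmem : (1 / (2 * a) : ℝ) ∈ Set.Icc (x 0) (x t₀) := ⟨hx0.le, hxt₀.le⟩
  obtain ⟨s, hs, hxs⟩ := this hmem
  exact hne s (hsub hs) hxs
end

section
/- Let α ≥ 0, ε > 0, T > 0, ν₁ > 0 and C₁, C₂, C₃, F ≥ 0 be real numbers. Set δ := √(2+α)·exp(−εT/(2+α)) and D := 1 − δ − (C₂/ν₁)·(1 + F), and assume D > 0. Define R_cr := (C₁·F + (C₃/ν₁)·F²)/D and assume 0 < R_cr < 1. Then for every R with R_cr ≤ R < 1 and every x with 0 ≤ x ≤ R, one has C₁·F + (C₂/ν₁)·x²·(1 + F) + (C₃/ν₁)·F² + δ·x ≤ R. -/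
/-!
Write `N = C₁F + (C₃/ν₁)F²` and `a = (C₂/ν₁)(1+F)`, so that `D = 1 - δ - a` and `R_cr = N / D`.
For `0 ≤ x ≤ R ≤ 1` the right-hand side `N + a x² + δ x` is at most `N + (a + δ) R`, and
`R_cr ≤ R` means `N ≤ R D = R - (a + δ) R`.
-/

lemma add_mul_sq_add_mul_le {N a δ R x : ℝ} (ha : 0 ≤ a) (hδ : 0 ≤ δ) (hx : 0 ≤ x)
    (hxR : x ≤ R) (hR : R ≤ 1) (hN : N ≤ R * (1 - δ - a)) :
    N + a * x ^ 2 + δ * x ≤ R := by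
  have hx2 : x ^ 2 ≤ R := by nlinarith
  calc N + a * x ^ 2 + δ * x ≤ R * (1 - δ - a) + a * R + δ * R := by gcongr
    _ = R := by ring

theorem poincare_map_ball_invariance_general
    (α ε T ν₁ C₁ C₂ C₃ F : ℝ)
    (hν₁ : 0 < ν₁)
    (hC₂ : 0 ≤ C₂) (hF : 0 ≤ F)
    (δ D R_cr : ℝ)
    (hδ : δ = Real.sqrt (2 + α) * Real.exp (-ε * T / (2 + α)))
    (hD : D = 1 - δ - (C₂ / ν₁) * (1 + F))
    (hD_pos : 0 < D)
    (hR_cr : R_cr = (C₁ * F + (C₃ / ν₁) * F ^ 2) / D) :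
    ∀ R, R_cr ≤ R → R < 1 → ∀ x, 0 ≤ x → x ≤ R →
      C₁ * F + (C₂ / ν₁) * x ^ 2 * (1 + F) + (C₃ / ν₁) * F ^ 2 + δ * x ≤ R := by
  intro R hR_cr_le hR_lt x hx hxR
  have hδ_nonneg : 0 ≤ δ := hδ ▸ by positivity
  have hN : C₁ * F + (C₃ / ν₁) * F ^ 2 ≤ R * (1 - δ - C₂ / ν₁ * (1 + F)) := by
    rw [← hD, ← div_le_iff₀ hD_pos, ← hR_cr]
    exact hR_cr_le
  have key := add_mul_sq_add_mul_le (by positivity) hδ_nonneg hx hxR hR_lt.le hN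
  linarith

/-- The Poincaré map estimate: with `δ = √(2+α)·exp(-εT/(2+α))`,
`D = 1 - δ - (C₂/ν₁)(1+F) > 0` and `R_cr = (C₁F + (C₃/ν₁)F²)/D ∈ (0,1)`,
for every `R ∈ [R_cr, 1)` and every `x ∈ [0, R]` one has
`C₁F + (C₂/ν₁)x²(1+F) + (C₃/ν₁)F² + δx ≤ R`. -/
theorem poincare_map_ball_invariance
    (α ε T ν₁ C₁ C₂ C₃ F : ℝ)
    (hα : 0 ≤ α) (hε : 0 < ε) (hT : 0 < T) (hν₁ : 0 < ν₁)
    (hC₁ : 0 ≤ C₁) (hC₂ : 0 ≤ C₂) (hC₃ : 0 ≤ C₃) (hF : 0 ≤ F)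
    (δ D R_cr : ℝ)
    (hδ : δ = Real.sqrt (2 + α) * Real.exp (-ε * T / (2 + α)))
    (hD : D = 1 - δ - (C₂ / ν₁) * (1 + F))
    (hD_pos : 0 < D)
    (hR_cr : R_cr = (C₁ * F + (C₃ / ν₁) * F ^ 2) / D)
    (hR_cr_pos : 0 < R_cr) (hR_cr_lt : R_cr < 1) :
    ∀ R, R_cr ≤ R → R < 1 → ∀ x, 0 ≤ x → x ≤ R →
      C₁ * F + (C₂ / ν₁) * x ^ 2 * (1 + F) + (C₃ / ν₁) * F ^ 2 + δ * x ≤ R :=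
  poincare_map_ball_invariance_general α ε T ν₁ C₁ C₂ C₃ F hν₁ hC₂ hF δ D R_cr hδ hD hD_pos hR_cr
end
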